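/- arXiv:1511.05681 — 6 statements merged into one kernel-verified Lean document; each statement's English description precedes it below -/
import Mathlib

section
/- For all integers n ≥ 1, k ≥ 0, and ℓ ≥ 0, the sum E(n,k,ℓ) = Σ ∏_{t=0}^{k} N(i_t, j_t + 1), where the sum ranges over all compositions (i_0, i_1, …, i_k) of n into k+1 positive parts and all weak compositions (j_0, j_1, …, j_k) of ℓ into k+1 nonnegative parts, satisfies E(n,k,ℓ) = N_k(n, ℓ+1) = ((k+1)/n)·C(n, ℓ+1+k)·C(n, ℓ). -/
/-!
Let `S m = ∑ N_{m-1}(n, ℓ+1) xⁿ yˡ` for `m ≥ 1` and `S 0 = 1`, so that `S 1 = N` is the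
Narayana series and the sum in question is the coefficient of `xⁿ yˡ` in `N^(k+1)`. Pascal's rule
gives `S (m+1) = x (S m + (1 + y) S (m+1) + y S (m+2))`, which for `S m = N^m` is the functional
equation `N = x (1 + N) (1 + y N)`. Multiplying the recurrence by `S 1` shows that the differences
`S 1 * S m - S (m+1)` satisfy the same recurrence with initial term `0`; because of the factor `x`
they vanish coefficient by coefficient, by induction on the degree in `x`. Hence `S m = N^m`.
-/

open Finset PowerSeries

theorem PowerSeries.coeff_prod_fin_eq_sum_antidiagonalTuple {R : Type*} [CommSemiring R]
    {k : ℕ} (f : Fin k → R⟦X⟧) (n : ℕ) :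
    coeff n (∏ t, f t) = ∑ i ∈ Nat.antidiagonalTuple k n, ∏ t, coeff (i t) (f t) := by
  rw [coeff_prod, finsuppAntidiag, sum_map, ← piAntidiag_univ_fin_eq_antidiagonalTuple]
  exact sum_attach _ (fun i : Fin k → ℕ => ∏ t, coeff (i t) (f t))

theorem PowerSeries.eq_zero_of_eq_X_mul {R : Type*} [Semiring R] {D : ℕ → R⟦X⟧} (a b : R)
    (h₀ : D 0 = 0) (h : ∀ m, D (m + 1) = X * (D m + C a * D (m + 1) + C b * D (m + 2))) (m : ℕ) :
    D m = 0 := by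
  suffices ∀ n m, coeff n (D m) = 0 from ext fun n => by simpa using this n m
  intro n
  induction n with
  | zero =>
    rintro (_ | m)
    · simp [h₀]
    · rw [h, coeff_zero_X_mul]
  | succ n ih =>
    rintro (_ | m)
    · simp [h₀]
    · rw [h, coeff_succ_X_mul]
      simp [coeff_C_mul, ih]

theorem PowerSeries.eq_pow_of_eq_X_mul {R : Type*} [CommRing R] {S : ℕ → R⟦X⟧} (a b : R)
    (h₀ : S 0 = 1) (h : ∀ m, S (m + 1) = X * (S m + C a * S (m + 1) + C b * S (m + 2))) (m : ℕ) :
    S m = S 1 ^ m := by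
  have hmul : ∀ m, S 1 * S m - S (m + 1) = 0 :=
    eq_zero_of_eq_X_mul a b (by simp [h₀]) fun m => by linear_combination S 1 * h m - h (m + 1)
  induction m with
  | zero => exact h₀
  | succ m ih => rw [pow_succ', ← ih]; exact (sub_eq_zero.mp (hmul m)).symm

theorem Nat.cast_choose_succ_right_eq {R : Type*} [CommRing R] (n k : ℕ) :
    (n.choose (k + 1) : R) * (k + 1) = n.choose k * (n - k) := by
  rcases le_or_gt k n with h | h
  · exact_mod_cast congrArg (Nat.cast : ℕ → R) (Nat.choose_succ_right_eq n k) |>.trans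
      (by push_cast [h]; ring)
  · simp [Nat.choose_eq_zero_of_lt h, Nat.choose_eq_zero_of_lt (h.trans k.lt_succ_self)]

/-- The paper's `N_{m-1}(n, ℓ+1)`; it is `0` at `n = 0` (division by zero) and at `m = 0`. -/
def genNarayana (m n ℓ : ℕ) : ℚ := m / n * n.choose (ℓ + m) * n.choose ℓ

theorem genNarayana_succ_one (m ℓ : ℕ) :
    genNarayana (m + 1) 1 ℓ = if m = 0 ∧ ℓ = 0 then 1 else 0 := by
  rcases m with _ | m <;> rcases ℓ with _ | ℓ <;> simp [genNarayana, Nat.choose_eq_zero_iff]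
  omega

theorem genNarayana_succ_zero (m : ℕ) {n : ℕ} (hn : n ≠ 0) :
    genNarayana (m + 1) (n + 1) 0 = genNarayana m n 0 + genNarayana (m + 1) n 0 := by
  have hrat := Nat.cast_choose_succ_right_eq (R := ℚ) n m
  simp only [genNarayana, zero_add, Nat.choose_zero_right, Nat.choose_succ_succ]
  have : (n : ℚ) ≠ 0 := by exact_mod_cast hn
  field_simp
  push_cast
  linear_combination -hrat

theorem genNarayana_succ_succ (m : ℕ) {n : ℕ} (hn : n ≠ 0) (ℓ : ℕ) :
    genNarayana (m + 1) (n + 1) (ℓ + 1) = genNarayana m n (ℓ + 1) + genNarayana (m + 1) n (ℓ + 1)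
      + genNarayana (m + 1) n ℓ + genNarayana (m + 2) n ℓ := by
  have hA := Nat.cast_choose_succ_right_eq (R := ℚ) n (ℓ + m + 1)
  have hc := Nat.cast_choose_succ_right_eq (R := ℚ) n ℓ
  simp only [genNarayana]
  rw [show ℓ + 1 + (m + 1) = ℓ + m + 1 + 1 by ring, show ℓ + 1 + m = ℓ + m + 1 by ring,
    show ℓ + (m + 2) = ℓ + m + 1 + 1 by ring, show ℓ + (m + 1) = ℓ + m + 1 by ring,
    Nat.choose_succ_succ, Nat.choose_succ_succ n ℓ]
  have : (n : ℚ) ≠ 0 := by exact_mod_cast hn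
  field_simp
  push_cast at hA hc ⊢
  linear_combination (n.choose (ℓ + m + 2) + n.choose (ℓ + m + 1) : ℚ) * hc
    - (n.choose (ℓ + 1) + n.choose ℓ : ℚ) * hA

/-- The outer variable is `x`, the inner one `y`. -/
noncomputable def narayanaSeries : ℕ → ℚ⟦X⟧⟦X⟧
  | 0 => 1
  | m + 1 => mk fun n => mk fun ℓ => genNarayana (m + 1) n ℓ

theorem constantCoeff_narayanaSeries (m : ℕ) :
    constantCoeff (narayanaSeries m) = if m = 0 then 1 else 0 := by
  rcases m with _ | m
  · simp [narayanaSeries]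
  · ext ℓ; simp [narayanaSeries, genNarayana]

theorem coeff_coeff_narayanaSeries_succ (m n ℓ : ℕ) :
    coeff ℓ (coeff n (narayanaSeries (m + 1))) = genNarayana (m + 1) n ℓ := by
  simp [narayanaSeries]

theorem coeff_coeff_narayanaSeries {n : ℕ} (hn : n ≠ 0) (m ℓ : ℕ) :
    coeff ℓ (coeff n (narayanaSeries m)) = genNarayana m n ℓ := by
  rcases m with _ | m
  · simp [narayanaSeries, genNarayana, hn]
  · exact coeff_coeff_narayanaSeries_succ m n ℓ

theorem narayanaSeries_succ (m : ℕ) :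
    narayanaSeries (m + 1) = X * (narayanaSeries m + C (1 + X) * narayanaSeries (m + 1)
      + C X * narayanaSeries (m + 2)) := by
  ext n ℓ
  rcases n with _ | n
  · simp [narayanaSeries, genNarayana]
  rw [coeff_succ_X_mul, coeff_coeff_narayanaSeries n.succ_ne_zero]
  simp only [map_add (coeff n), coeff_C_mul]
  rcases eq_or_ne n 0 with rfl | hn
  · rcases m with _ | m <;> simp [constantCoeff_narayanaSeries, genNarayana_succ_one, coeff_one]
  rcases ℓ with _ | ℓ
  · simp only [add_mul, one_mul, map_add, coeff_zero_X_mul, coeff_coeff_narayanaSeries hn,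
      genNarayana_succ_zero m hn, add_zero]
  · simp only [add_mul, one_mul, map_add, coeff_succ_X_mul, coeff_coeff_narayanaSeries hn,
      genNarayana_succ_succ m hn]
    abel

theorem narayanaSeries_eq_pow (m : ℕ) : narayanaSeries m = narayanaSeries 1 ^ m :=
  eq_pow_of_eq_X_mul (1 + X) X rfl narayanaSeries_succ m

theorem narayana_identity_general (n k ℓ : ℕ) :
    ∑ i ∈ (Finset.Nat.antidiagonalTuple (k + 1) n).filter (fun i => ∀ t, 0 < i t),
      ∑ j ∈ Finset.Nat.antidiagonalTuple (k + 1) ℓ,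
        ∏ t : Fin (k + 1),
          (((i t).choose (j t + 1) * (i t).choose (j t) : ℕ) : ℚ) / (i t)
      = ((k + 1 : ℚ) / n) * (n.choose (ℓ + 1 + k)) * (n.choose ℓ) := by
  have hnarayana (i j : ℕ) :
      ((i.choose (j + 1) * i.choose j : ℕ) : ℚ) / i = coeff j (coeff i (narayanaSeries 1)) := by
    rw [coeff_coeff_narayanaSeries_succ, genNarayana]
    push_cast
    ring
  simp only [hnarayana]
  rw [sum_filter_of_ne fun i _ hi t => Nat.pos_of_ne_zero fun hit => hi <|
    sum_eq_zero fun j _ => prod_eq_zero (mem_univ t) (by simp [hit, constantCoeff_narayanaSeries])]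
  calc _ = coeff ℓ (coeff n (narayanaSeries 1 ^ (k + 1))) := by
        simp only [← Fin.prod_const, coeff_prod_fin_eq_sum_antidiagonalTuple, map_sum]
    _ = _ := by
        rw [← narayanaSeries_eq_pow, coeff_coeff_narayanaSeries_succ, genNarayana,
          add_assoc, add_comm 1 k]
        push_cast
        ring

/-- **Lemma (generalized Narayana identity).** For integers `n ≥ 1`, `k ≥ 0`,
`ℓ ≥ 0`:  `E(n,k,ℓ) = Σ ∏_{t=0}^{k} N(i_t, j_t + 1) = N_k(n, ℓ+1)
= ((k+1)/n)·C(n, ℓ+1+k)·C(n, ℓ)`, where the sum ranges over all compositions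
`(i_0,…,i_k)` of `n` into `k+1` positive parts and all weak compositions
`(j_0,…,j_k)` of `ℓ`, and `N(i, j+1) = (1/i)·C(i, j+1)·C(i, j)`. -/
theorem narayana_identity (n k ℓ : ℕ) (hn : 1 ≤ n) :
    ∑ i ∈ (Finset.Nat.antidiagonalTuple (k + 1) n).filter (fun i => ∀ t, 0 < i t),
      ∑ j ∈ Finset.Nat.antidiagonalTuple (k + 1) ℓ,
        ∏ t : Fin (k + 1),
          (((i t).choose (j t + 1) * (i t).choose (j t) : ℕ) : ℚ) / (i t)
      = ((k + 1 : ℚ) / n) * (n.choose (ℓ + 1 + k)) * (n.choose ℓ) :=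
  narayana_identity_general n k ℓ
end

section
/- For all integers n > k ≥ 0, Σ ∏_{t=0}^{k} C_{i_t} = ((2k+2)/(n+1))·C(2n−2k−1, n), where the sum ranges over all compositions (i_0, i_1, …, i_k) of n−k into k+1 positive parts. -/
/-!
With `C(x) = ∑ Cᵢ xⁱ` the Catalan series, the sum over compositions of `n - k` into `k + 1`
positive parts is the coefficient of `x^(n-k)` in `(C - 1)^(k+1) = (x C²)^(k+1)`, that is, the
coefficient of `x^(n-2k-1)` in `C^(2k+2)`. The coefficients `[xⁿ] C^(p+1) = (p+1)/(n+p+1)·C(2n+p, n)`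
are obtained by a double induction on `n` and `p` from `C^(p+2) = C^(p+1) + x C^(p+3)`, which is
`C = 1 + x C²` multiplied by `C^(p+1)`.
-/

open Finset

namespace PowerSeries

variable {R : Type*} [CommSemiring R]

theorem coeff_pow_eq_sum_antidiagonalTuple (φ : R⟦X⟧) (p n : ℕ) :
    coeff n (φ ^ p) = ∑ x ∈ Nat.antidiagonalTuple p n, ∏ t, coeff (x t) φ := by
  rw [← Fin.prod_const, coeff_prod]
  exact sum_equiv Finsupp.equivFunOnFinite (by simp [Nat.mem_antidiagonalTuple]) fun _ _ => rfl

theorem coeff_pow_eq_sum_pos_antidiagonalTuple {φ : R⟦X⟧} (hφ : constantCoeff φ = 0) (p n : ℕ) :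
    coeff n (φ ^ p) =
      ∑ x ∈ (Nat.antidiagonalTuple p n).filter (fun x => ∀ t, 0 < x t), ∏ t, coeff (x t) φ := by
  rw [coeff_pow_eq_sum_antidiagonalTuple, sum_filter_of_ne]
  intro x _ hx t
  refine Nat.pos_of_ne_zero fun hxt => hx (prod_eq_zero (mem_univ t) ?_)
  rw [hxt, coeff_zero_eq_constantCoeff_apply, hφ]

theorem coeff_X_mul_catalanSeries_sq {n : ℕ} (hn : 0 < n) :
    coeff n (X * catalanSeries ^ 2) = catalan n := by
  have := congrArg (coeff n) catalanSeries_sq_mul_X_add_one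
  rwa [map_add, coeff_one, if_neg hn.ne', add_zero, mul_comm, catalanSeries_coeff] at this

theorem catalanSeries_pow_add_two (p : ℕ) :
    catalanSeries ^ (p + 2) = catalanSeries ^ (p + 1) + X * catalanSeries ^ (p + 3) := by
  rw [pow_succ]
  nth_rewrite 2 [← catalanSeries_sq_mul_X_add_one]
  ring

theorem sum_prod_catalan_pos_antidiagonalTuple (p n : ℕ) :
    ∑ x ∈ (Nat.antidiagonalTuple p n).filter (fun x => ∀ t, 0 < x t), ∏ t, catalan (x t)
      = coeff n ((X * catalanSeries ^ 2) ^ p) := by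
  rw [coeff_pow_eq_sum_pos_antidiagonalTuple (by simp)]
  refine sum_congr rfl fun x hx => prod_congr rfl fun t _ => ?_
  exact (coeff_X_mul_catalanSeries_sq ((mem_filter.mp hx).2 t)).symm

end PowerSeries

noncomputable def catalanPowCoeff (n p : ℕ) : ℚ :=
  (p + 1) / (n + p + 1) * (2 * n + p).choose n

theorem catalanPowCoeff_zero_left (p : ℕ) : catalanPowCoeff 0 p = 1 := by
  simpa [catalanPowCoeff] using Nat.cast_add_one_ne_zero p

theorem catalanPowCoeff_zero_right (n : ℕ) : catalanPowCoeff n 0 = catalan n := by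
  rw [catalanPowCoeff, add_zero, ← Nat.centralBinom_eq_two_mul_choose,
    ← succ_mul_catalan_eq_centralBinom]
  push_cast
  field_simp
  ring

theorem catalanPowCoeff_succ_succ (m q : ℕ) :
    catalanPowCoeff (m + 1) (q + 1) = catalanPowCoeff (m + 1) q + catalanPowCoeff m (q + 2) := by
  have hratio : (2 * m + q + 2).choose (m + 1) * (m + 1) = (2 * m + q + 2).choose m * (m + q + 2) := by
    rw [Nat.choose_succ_right_eq]
    congr 1
    omega
  have hratio' : ((2 * m + q + 2).choose (m + 1) : ℚ) * (m + 1)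
      = (2 * m + q + 2).choose m * (m + q + 2) := by
    exact_mod_cast hratio
  simp only [catalanPowCoeff]
  rw [show 2 * (m + 1) + (q + 1) = 2 * m + q + 2 + 1 by ring, Nat.choose_succ_succ',
    show 2 * (m + 1) + q = 2 * m + q + 2 by ring, show 2 * m + (q + 2) = 2 * m + q + 2 by ring]
  push_cast
  field_simp
  linear_combination ((m : ℚ) + q + 3) * hratio'

namespace PowerSeries

theorem coeff_catalanSeries_pow_succ (n p : ℕ) :
    ((coeff n (catalanSeries ^ (p + 1)) : ℕ) : ℚ) = catalanPowCoeff n p := by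
  induction n generalizing p with
  | zero =>
    rw [catalanPowCoeff_zero_left, coeff_zero_eq_constantCoeff_apply, map_pow,
      catalanSeries_constantCoeff, one_pow, Nat.cast_one]
  | succ m ihm =>
    induction p with
    | zero => rw [pow_one, catalanSeries_coeff, catalanPowCoeff_zero_right]
    | succ q ihq =>
      rw [catalanSeries_pow_add_two, map_add, coeff_succ_X_mul, Nat.cast_add, ihq, ihm,
        catalanPowCoeff_succ_succ]

end PowerSeries

open PowerSeries in
/-- For all integers `n > k ≥ 0`,
`Σ ∏_{t=0}^{k} C_{i_t} = ((2k+2)/(n+1))·C(2n−2k−1, n)`, where the sum ranges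
over all compositions `(i_0,…,i_k)` of `n−k` into `k+1` positive parts and
`C_i` is the `i`-th Catalan number. -/
theorem catalan_composition_sum (n k : ℕ) (h : k < n) :
    ∑ i ∈ (Finset.Nat.antidiagonalTuple (k + 1) (n - k)).filter (fun i => ∀ t, 0 < i t),
      ∏ t : Fin (k + 1), (catalan (i t) : ℚ)
      = ((2 * k + 2 : ℚ) / (n + 1)) * ((2 * n - 2 * k - 1).choose n) := by
  have hsum := congrArg (Nat.cast : ℕ → ℚ)
    (sum_prod_catalan_pos_antidiagonalTuple (k + 1) (n - k))
  push_cast at hsum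
  rw [hsum, mul_pow, ← pow_mul, coeff_X_pow_mul']
  split_ifs with hle
  · obtain ⟨j, rfl⟩ : ∃ j, n = j + 2 * k + 1 := ⟨n - (2 * k + 1), by omega⟩
    rw [show j + 2 * k + 1 - k - (k + 1) = j by omega, show 2 * (k + 1) = 2 * k + 1 + 1 by ring,
      coeff_catalanSeries_pow_succ, catalanPowCoeff,
      show 2 * (j + 2 * k + 1) - 2 * k - 1 = j + 2 * k + 1 + j by omega, Nat.choose_symm_add,
      show j + 2 * k + 1 + j = 2 * j + (2 * k + 1) by ring]
    push_cast
    ring_nf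
  · rw [Nat.choose_eq_zero_of_lt (by omega)]
    simp
end

section
/- The polynomial 4x³ − 3x² + 4x − 1 has a unique real root ω, this root satisfies 0 < ω < 1/2, and the function f : [0, 1/2) → ℝ defined by f(x) = (2−x)^{2−x}(1+x)^{1+x} / (x^x (1−x)^{1−x} (2x)^{2x} (1−2x)^{1−2x}), with the convention 0⁰ = 1, attains its maximum on [0, 1/2) at x = ω; that is, f(x) ≤ f(ω) for all x ∈ [0, 1/2). -/
/-!
Since `0 ^ 0 = 1 = exp (0 * log 0)`, on `[0, 1/2]` we have `f = exp ∘ logf` with `logf` a signed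
sum of terms `u log u`, continuous up to `x = 0`. On `(0, 1/2)` its derivative is
`log ((1+x)(1-x)(1-2x)²) - log ((2-x) x (2x)²)`, and the difference of the two arguments is
exactly `-(4x³ - 3x² + 4x - 1)`. The cubic is strictly increasing, so `logf` increases up to its
root `ω` and decreases afterwards.
-/

open Real Set

/-- `f(x) = (2-x)^{2-x}(1+x)^{1+x} / (x^x (1-x)^{1-x} (2x)^{2x} (1-2x)^{1-2x})`,
with real exponents (`0⁰ = 1`). -/
noncomputable def f (x : ℝ) : ℝ :=
  ((2 - x) ^ (2 - x) * (1 + x) ^ (1 + x)) /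
    (x ^ x * (1 - x) ^ (1 - x) * (2 * x) ^ (2 * x) * (1 - 2 * x) ^ (1 - 2 * x))

theorem isMaxOn_of_deriv_pos_of_deriv_neg {g : ℝ → ℝ} {a b c : ℝ} (hc : c ∈ Ico a b)
    (hg : ContinuousOn g (Ico a b)) (hpos : ∀ x ∈ Ioo a c, 0 < deriv g x)
    (hneg : ∀ x ∈ Ioo c b, deriv g x < 0) : IsMaxOn g (Ico a b) c := by
  intro x hx
  rcases le_total x c with hxc | hcx
  · have hmono : MonotoneOn g (Icc a c) :=
      (strictMonoOn_of_deriv_pos (convex_Icc a c) (hg.mono (Icc_subset_Ico_right hc.2))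
        (by rwa [interior_Icc])).monotoneOn
    exact hmono ⟨hx.1, hxc⟩ ⟨hc.1, le_rfl⟩ hxc
  · have hanti : AntitoneOn g (Ico c b) :=
      (strictAntiOn_of_deriv_neg (convex_Ico c b) (hg.mono (Ico_subset_Ico_left hc.1))
        (by rwa [interior_Ico])).antitoneOn
    exact hanti ⟨le_rfl, hc.2⟩ ⟨hcx, hx.2⟩ hcx

lemma rpow_self_eq_exp_mul_log {x : ℝ} (hx : 0 ≤ x) : x ^ x = exp (x * log x) := by
  rcases hx.eq_or_lt with rfl | hx
  · simp
  · rw [rpow_def_of_pos hx, mul_comm]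

lemma HasDerivAt.mul_log {u : ℝ → ℝ} {u' x : ℝ} (hu : HasDerivAt u u' x) (hx : u x ≠ 0) :
    HasDerivAt (fun t ↦ u t * Real.log (u t)) ((Real.log (u x) + 1) * u') x :=
  (hasDerivAt_mul_log hx).comp x hu

def cubic (x : ℝ) : ℝ := 4 * x ^ 3 - 3 * x ^ 2 + 4 * x - 1

lemma cubic_strictMono : StrictMono cubic := by
  intro x y hxy
  simp only [cubic]
  nlinarith [sq_nonneg (x + y), sq_nonneg (x - y), sq_nonneg (x + y - 1),
    mul_pos (sub_pos.2 hxy) (sub_pos.2 hxy)]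

lemma exists_cubic_eq_zero : ∃ ω, cubic ω = 0 := by
  have hcont : ContinuousOn cubic (Icc 0 (1 / 2)) := by
    unfold cubic
    fun_prop
  obtain ⟨ω, -, hω⟩ := intermediate_value_Icc (by norm_num) hcont
    (show (0 : ℝ) ∈ Icc (cubic 0) (cubic (1 / 2)) by norm_num [cubic])
  exact ⟨ω, hω⟩

lemma cubic_root_mem_Ioo {ω : ℝ} (hω : cubic ω = 0) : ω ∈ Ioo 0 (1 / 2) := by
  constructor
  · exact cubic_strictMono.lt_iff_lt.1 (by rw [hω]; norm_num [cubic])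
  · exact cubic_strictMono.lt_iff_lt.1 (by rw [hω]; norm_num [cubic])

noncomputable def logf (x : ℝ) : ℝ :=
  (2 - x) * log (2 - x) + (1 + x) * log (1 + x) - x * log x - (1 - x) * log (1 - x)
    - 2 * x * log (2 * x) - (1 - 2 * x) * log (1 - 2 * x)

lemma f_eq_exp_logf {x : ℝ} (h0 : 0 ≤ x) (h1 : x ≤ 1 / 2) : f x = exp (logf x) := by
  rw [f, logf]
  simp only [rpow_self_eq_exp_mul_log, h0, show (0 : ℝ) ≤ 2 - x by linarith,
    show (0 : ℝ) ≤ 1 + x by linarith, show (0 : ℝ) ≤ 1 - x by linarith,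
    show (0 : ℝ) ≤ 2 * x by linarith, show (0 : ℝ) ≤ 1 - 2 * x by linarith, ← exp_add, ← exp_sub]
  ring_nf

lemma continuous_logf : Continuous logf := by
  have := continuous_mul_log
  unfold logf
  fun_prop

lemma hasDerivAt_logf {x : ℝ} (h0 : 0 < x) (h1 : x < 1 / 2) :
    HasDerivAt logf
      (log ((1 + x) * (1 - x) * (1 - 2 * x) ^ 2) - log ((2 - x) * x * (2 * x) ^ 2)) x := by
  have hid := hasDerivAt_id' (x := x)
  have hsum := (((((HasDerivAt.mul_log (hid.const_sub 2) (by linarith)).add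
    (HasDerivAt.mul_log (hid.const_add 1) (by linarith))).sub
    (HasDerivAt.mul_log hid h0.ne')).sub (HasDerivAt.mul_log (hid.const_sub 1) (by linarith))).sub
    (HasDerivAt.mul_log (hid.const_mul 2) (by linarith))).sub
    (HasDerivAt.mul_log ((hid.const_mul 2).const_sub 1) (by linarith))
  refine (show HasDerivAt logf _ x from hsum).congr_deriv ?_
  have ha : 0 < 1 + x := by linarith
  have hb : 0 < 1 - x := by linarith
  have hc : 0 < 1 - 2 * x := by linarith
  have hd : 0 < 2 - x := by linarith
  rw [log_mul (mul_pos ha hb).ne' (pow_pos hc 2).ne', log_mul ha.ne' hb.ne', log_pow,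
    log_mul (mul_pos hd h0).ne' (pow_pos (by positivity) 2).ne', log_mul hd.ne' h0.ne', log_pow]
  push_cast
  ring

lemma cubic_eq_sub (x : ℝ) :
    cubic x = (2 - x) * x * (2 * x) ^ 2 - (1 + x) * (1 - x) * (1 - 2 * x) ^ 2 := by
  unfold cubic
  ring

lemma deriv_logf_pos {x : ℝ} (h0 : 0 < x) (h1 : x < 1 / 2) (hx : cubic x < 0) :
    0 < deriv logf x := by
  rw [(hasDerivAt_logf h0 h1).deriv, sub_pos]
  have hd : 0 < 2 - x := by linarith
  exact log_lt_log (by positivity) (by linarith [cubic_eq_sub x])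

lemma deriv_logf_neg {x : ℝ} (h0 : 0 < x) (h1 : x < 1 / 2) (hx : 0 < cubic x) :
    deriv logf x < 0 := by
  rw [(hasDerivAt_logf h0 h1).deriv, sub_neg]
  have ha : 0 < 1 + x := by linarith
  have hb : 0 < 1 - x := by linarith
  have hc : 0 < 1 - 2 * x := by linarith
  exact log_lt_log (by positivity) (by linarith [cubic_eq_sub x])

lemma isMaxOn_logf {ω : ℝ} (hω : cubic ω = 0) : IsMaxOn logf (Ico 0 (1 / 2)) ω := by
  obtain ⟨hω0, hω1⟩ := cubic_root_mem_Ioo hω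
  refine isMaxOn_of_deriv_pos_of_deriv_neg ⟨hω0.le, hω1⟩ continuous_logf.continuousOn
    (fun x hx ↦ deriv_logf_pos hx.1 (hx.2.trans hω1) ?_)
    (fun x hx ↦ deriv_logf_neg (hω0.trans hx.1) hx.2 ?_)
  · exact hω ▸ cubic_strictMono hx.2
  · exact hω ▸ cubic_strictMono hx.1

/-- The polynomial `4x³ − 3x² + 4x − 1` has a unique real root `ω`, this root
satisfies `0 < ω < 1/2`, and `f` attains its maximum on `[0, 1/2)` at `ω`:
`f(x) ≤ f(ω)` for all `x ∈ [0, 1/2)`. -/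
theorem f_max_at_root :
    (∃! ω : ℝ, 4 * ω ^ 3 - 3 * ω ^ 2 + 4 * ω - 1 = 0) ∧
    ∀ ω : ℝ, 4 * ω ^ 3 - 3 * ω ^ 2 + 4 * ω - 1 = 0 →
      0 < ω ∧ ω < 1 / 2 ∧ ∀ x ∈ Set.Ico (0 : ℝ) (1 / 2), f x ≤ f ω := by
  refine ⟨?_, fun ω hω ↦ ?_⟩
  · obtain ⟨ω, hω⟩ := exists_cubic_eq_zero
    exact ⟨ω, hω, fun y hy ↦ cubic_strictMono.injective (hy.trans hω.symm)⟩
  · obtain ⟨hω0, hω1⟩ := cubic_root_mem_Ioo hω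
    refine ⟨hω0, hω1, fun x hx ↦ ?_⟩
    rw [f_eq_exp_logf hx.1 hx.2.le, f_eq_exp_logf hω0.le hω1.le]
    exact exp_le_exp.2 (isMaxOn_logf hω hx)
end

section
/- For every real y with 0 < y ≤ 1/2, the polynomial p_y(u) = −u³ + (y²−y+1)u² − u − y² + y satisfies p_y'(u) < 0 for all real u; consequently p_y has exactly one real root c_y, and this root satisfies 0 < c_y < y. -/
/-- For `0 < y ≤ 1/2`, the polynomial `p_y(u) = −u³ + (y²−y+1)u² − u − y² + y`
has `p_y'(u) < 0` for all real `u`; consequently `p_y` has exactly one real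
root `c_y`, and this root satisfies `0 < c_y < y`. -/
theorem poly_unique_root (y : ℝ) (hy : 0 < y) (hy' : y ≤ 1 / 2) :
    (∀ u : ℝ, deriv (fun u : ℝ => -u ^ 3 + (y ^ 2 - y + 1) * u ^ 2 - u - y ^ 2 + y) u < 0) ∧
    (∃! c : ℝ, -c ^ 3 + (y ^ 2 - y + 1) * c ^ 2 - c - y ^ 2 + y = 0) ∧
    (∀ c : ℝ, -c ^ 3 + (y ^ 2 - y + 1) * c ^ 2 - c - y ^ 2 + y = 0 → 0 < c ∧ c < y) := by
  set f : ℝ → ℝ := fun u : ℝ => -u ^ 3 + (y ^ 2 - y + 1) * u ^ 2 - u - y ^ 2 + y with hf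
  have hd : ∀ u : ℝ, HasDerivAt f (-(3 * u ^ 2) + (y ^ 2 - y + 1) * (2 * u) - 1) u := by
    intro u
    have h1 : HasDerivAt (fun u : ℝ => -u ^ 3 + (y ^ 2 - y + 1) * u ^ 2 - u)
        (-(3 * u ^ 2) + (y ^ 2 - y + 1) * (2 * u) - 1) u := by
      have hp3 : HasDerivAt (fun u : ℝ => u ^ 3) (3 * u ^ 2) u := by
        simpa using hasDerivAt_pow 3 u
      have hp2 : HasDerivAt (fun u : ℝ => u ^ 2) (2 * u) u := by
        simpa using hasDerivAt_pow 2 u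
      exact (hp3.neg.add (hp2.const_mul _)).sub (hasDerivAt_id u)
    simpa [hf] using (h1.sub_const (y ^ 2)).add_const y
  have ha : y ^ 2 - y + 1 < 1 := by nlinarith
  have ha' : 0 < y ^ 2 - y + 1 := by nlinarith
  have hneg : ∀ u : ℝ, -(3 * u ^ 2) + (y ^ 2 - y + 1) * (2 * u) - 1 < 0 := by
    intro u
    nlinarith [sq_nonneg (u - 1), sq_nonneg (u + 1), sq_nonneg u, sq_nonneg (y ^ 2 - y + 1)]
  have hderiv : ∀ u : ℝ, deriv f u < 0 := by
    intro u
    rw [(hd u).deriv]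
    exact hneg u
  have hdiff : Differentiable ℝ f := fun u => (hd u).differentiableAt
  have hanti : StrictAnti f := strictAnti_of_deriv_neg hderiv
  have hf0 : 0 < f 0 := by simp only [hf]; nlinarith
  have hfy : f y < 0 := by simp only [hf]; nlinarith [pow_pos hy 3]
  have hroot : ∃ c ∈ Set.Ioo (0 : ℝ) y, f c = 0 := by
    have := intermediate_value_Ioo' (le_of_lt hy) hdiff.continuous.continuousOn
      (Set.mem_Ioo.mpr ⟨hfy, hf0⟩)
    obtain ⟨c, hc, hc0⟩ := this
    exact ⟨c, hc, hc0⟩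
  obtain ⟨c, hc, hc0⟩ := hroot
  refine ⟨hderiv, ⟨c, hc0, ?_⟩, ?_⟩
  · intro x hx
    exact hanti.injective (hx.trans hc0.symm)
  · intro x hx
    have : x = c := hanti.injective (hx.trans hc0.symm)
    exact this ▸ ⟨hc.1, hc.2⟩
end

section
/- For v ∈ (0, 1/2], let Q(v) denote the unique real root of p_v(u) = −u³ + (v²−v+1)u² − u − v² + v. If v ∈ (0.35, 1/2), then Q(v) < 4v/5; and if v ∈ [0.22, 0.35], then Q(v) < 9v/10. -/
/-- If `u` is a root of `p_v` and `0 ≤ c ≤ u`, then `p_v(c) ≥ 0`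
(since `p_v` is strictly decreasing when `v² - v + 1 ≤ 1`). -/
lemma key_mono (v u c : ℝ) (hA : v ^ 2 - v + 1 ≤ 1) (hc : 0 ≤ c) (hge : c ≤ u)
    (heq : -u ^ 3 + (v ^ 2 - v + 1) * u ^ 2 - u - v ^ 2 + v = 0) :
    0 ≤ -c ^ 3 + (v ^ 2 - v + 1) * c ^ 2 - c - v ^ 2 + v := by
  nlinarith [mul_nonneg (sub_nonneg.2 hge) (mul_nonneg (sub_nonneg.2 hA) (by linarith : (0:ℝ) ≤ u + c)),
    mul_nonneg (sub_nonneg.2 hge) (sq_nonneg (u + c - 2/3)),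
    mul_nonneg (sub_nonneg.2 hge) (sq_nonneg (u - c)),
    sub_nonneg.2 hge]

/-- Let `Q(v)` denote the unique real root of
`p_v(u) = −u³ + (v²−v+1)u² − u − v² + v` for `v ∈ (0, 1/2]`.  If
`v ∈ (0.35, 1/2)` then `Q(v) < 4v/5`, and if `v ∈ [0.22, 0.35]` then
`Q(v) < 9v/10`. -/
theorem root_bounds (Q : ℝ → ℝ)
    (hQ : ∀ v : ℝ, 0 < v → v ≤ 1 / 2 →
      -(Q v) ^ 3 + (v ^ 2 - v + 1) * (Q v) ^ 2 - Q v - v ^ 2 + v = 0) :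
    ∀ v : ℝ, (0.35 < v ∧ v < 1 / 2 → Q v < 4 * v / 5) ∧
      (0.22 ≤ v ∧ v ≤ 0.35 → Q v < 9 * v / 10) := by
  intro v
  constructor
  · rintro ⟨h1, h2⟩
    have heq := hQ v (by linarith) (by linarith)
    by_contra hge
    push_neg at hge
    have hA : v ^ 2 - v + 1 ≤ 1 := by nlinarith
    have h := key_mono v (Q v) (4 * v / 5) hA (by linarith) hge heq
    nlinarith [sq_nonneg v, sq_nonneg (v - 0.4)]
  · rintro ⟨h1, h2⟩
    have heq := hQ v (by linarith) (by linarith)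
    by_contra hge
    push_neg at hge
    have hA : v ^ 2 - v + 1 ≤ 1 := by nlinarith
    have h := key_mono v (Q v) (9 * v / 10) hA (by linarith) hge heq
    nlinarith [sq_nonneg v, sq_nonneg (v - 0.22), sq_nonneg (v - 0.35)]
end

section
/- For every permutation π ∈ S_n and every integer m with 0 ≤ m ≤ n−1, F(π, m) = F(π, n−m−1). -/
/-- The maximum entry of a list of naturals (0 for the empty list). -/
def listMax : List ℕ → ℕ
  | [] => 0
  | a :: t => max a (listMax t)

theorem listMax_mem : ∀ (l : List ℕ), l ≠ [] → listMax l ∈ l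
  | [a], _ => by simp [listMax]
  | a :: b :: t, _ => by
    by_cases h : listMax (b :: t) ≤ a
    · have hm : listMax (a :: b :: t) = a := max_eq_left h
      rw [hm]; exact List.mem_cons_self
    · have hm : listMax (a :: b :: t) = listMax (b :: t) := max_eq_right (le_of_not_ge h)
      rw [hm]
      exact List.mem_cons_of_mem _ (listMax_mem (b :: t) (by simp))

theorem length_takeWhile_lt {p : ℕ → Bool} {l : List ℕ} {x : ℕ}
    (hx : x ∈ l) (hpx : p x = false) : (l.takeWhile p).length < l.length := by
  induction l with
  | nil => cases hx
  | cons a t ih =>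
    by_cases hpa : p a
    · rw [List.takeWhile_cons_of_pos hpa]
      have hxt : x ∈ t := by
        rcases List.mem_cons.mp hx with rfl | h
        · rw [hpa] at hpx; cases hpx
        · exact h
      simpa using Nat.succ_lt_succ (ih hxt)
    · rw [List.takeWhile_cons_of_neg (by simpa using hpa)]
      simp

theorem length_dropWhile_le (p : ℕ → Bool) (l : List ℕ) :
    (l.dropWhile p).length ≤ l.length := by
  induction l with
  | nil => simp
  | cons a t ih =>
    rw [List.dropWhile_cons]
    split
    · exact le_trans ih (by simp)
    · simp

/-- West's stack-sorting map `s`: for a nonempty sequence `π = LnR` of distinct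
positive integers with largest entry `n`, `s(∅) = ∅` and `s(LnR) = s(L)s(R)n`. -/
def stackSort : List ℕ → List ℕ
  | [] => []
  | a :: t =>
    stackSort ((a :: t).takeWhile (fun x => x ≠ listMax (a :: t))) ++
      stackSort (((a :: t).dropWhile (fun x => x ≠ listMax (a :: t))).tail) ++
      [listMax (a :: t)]
termination_by l => l.length
decreasing_by
  · exact length_takeWhile_lt (listMax_mem _ (by simp)) (by simp)
  · have h := length_dropWhile_le (fun x => decide (x ≠ listMax (a :: t))) (a :: t)
    have h2 := List.length_tail (l := (a :: t).dropWhile (fun x => decide (x ≠ listMax (a :: t))))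
    simp only [List.length_cons] at *
    omega

/-- The number of descents of a sequence `σ₁σ₂⋯σ_n`: the number of indices
`i ∈ {1, …, n-1}` with `σ_i > σ_{i+1}`. -/
def numDescents (l : List ℕ) : ℕ := ((l.zip l.tail).filter (fun p => p.2 < p.1)).length

/-- The identity permutation `1 2 ⋯ n`, as a list. -/
def idPerm (n : ℕ) : List ℕ := List.range' 1 n

/-- The set of permutations of `{1, …, n}`, written as sequences (lists). -/
def Sn (n : ℕ) : Finset (List ℕ) := (idPerm n).permutations.toFinset

/-- The fertility `F(π)` of `π`: the number of `σ ∈ S_n` with `s(σ) = π`. -/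
def fertility (n : ℕ) (π : List ℕ) : ℕ :=
  ((Sn n).filter (fun σ => stackSort σ = π)).card

/-- `F(π, m)`: the number of `σ ∈ S_n` with exactly `m` descents and `s(σ) = π`. -/
def fertilityDes (n : ℕ) (π : List ℕ) (m : ℕ) : ℕ :=
  ((Sn n).filter (fun σ => stackSort σ = π ∧ numDescents σ = m)).card

/-- `W_t(n)`: the number of `t`-stack sortable permutations in `S_n`, i.e. the
number of `π ∈ S_n` with `s^t(π) = 12⋯n`. -/
def W (t n : ℕ) : ℕ :=
  ((Sn n).filter (fun σ => stackSort^[t] σ = idPerm n)).card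

/-- `W_t(n, k)`: the number of `t`-stack sortable permutations in `S_n` with
exactly `k` descents. -/
def Wdes (t n k : ℕ) : ℕ :=
  ((Sn n).filter (fun σ => stackSort^[t] σ = idPerm n ∧ numDescents σ = k)).card

/-!
Write a permutation as `σ = L n R` with `n` its largest entry. The map `φ = descentFlip`,
given by `φ(L n R) = φ(L) n φ(R)` when `L` and `R` are both nonempty and by
`φ(L n R) = φ(R) n φ(L)` otherwise, is an involution with `s(φ σ) = s(σ)`, because
`s(L n R) = s(L) s(R) n` and `s(∅) = ∅`. It also complements descents: `L n R` has a descent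
after `n` iff `R ≠ ∅`, while `φ(L n R)` has one iff `L ≠ ∅`, so by induction
`des(φ σ) + des(σ) = |σ| - 1`. Hence `φ` is a bijection between the two sets counted by
`F(π, m)` and `F(π, n - m - 1)`.
-/

section

variable {α : Type*} [LinearOrder α]

theorem List.exists_eq_append_cons_of_ne_nil {l : List α} (hne : l ≠ []) :
    ∃ L M R, l = L ++ M :: R ∧ (∀ x ∈ L, x < M) ∧ ∀ x ∈ R, x ≤ M := by
  induction l with
  | nil => exact absurd rfl hne
  | cons a t ih =>
    rcases eq_or_ne t [] with rfl | ht
    · exact ⟨[], a, [], rfl, by simp, by simp⟩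
    obtain ⟨L, M, R, rfl, hL, hR⟩ := ih ht
    rcases lt_or_ge a M with haM | hMa
    · exact ⟨a :: L, M, R, rfl, List.forall_mem_cons.2 ⟨haM, hL⟩, hR⟩
    · refine ⟨[], a, L ++ M :: R, rfl, by simp, ?_⟩
      simp only [List.mem_append, List.mem_cons]
      rintro x (hx | rfl | hx)
      exacts [(hL x hx).le.trans hMa, hMa, (hR x hx).trans hMa]

@[elab_as_elim]
theorem List.induction_on_max {motive : List α → Prop} (nil : motive [])
    (split : ∀ L M R, (∀ x ∈ L, x < M) → (∀ x ∈ R, x ≤ M) →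
      motive L → motive R → motive (L ++ M :: R)) (l : List α) : motive l := by
  rcases eq_or_ne l [] with rfl | hne
  · exact nil
  obtain ⟨L, M, R, rfl, hL, hR⟩ := List.exists_eq_append_cons_of_ne_nil hne
  exact split L M R hL hR (List.induction_on_max nil split L) (List.induction_on_max nil split R)
termination_by l.length
decreasing_by all_goals subst_vars; simp only [List.length_append, List.length_cons]; omega

@[elab_as_elim]
theorem List.Nodup.induction_on_max {motive : List α → Prop} {l : List α} (hl : l.Nodup)
    (nil : motive [])
    (split : ∀ L M R, (∀ x ∈ L, x < M) → (∀ x ∈ R, x < M) →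
      motive L → motive R → motive (L ++ M :: R)) : motive l := by
  induction l using List.induction_on_max with
  | nil => exact nil
  | split L M R hL hR ihL ihR =>
    obtain ⟨hndL, hndMR, -⟩ := List.nodup_append.1 hl
    obtain ⟨hMR, hndR⟩ := List.nodup_cons.1 hndMR
    have hR' : ∀ x ∈ R, x < M := fun x hx => (hR x hx).lt_of_ne (ne_of_mem_of_not_mem hx hMR)
    exact split L M R hL hR' (ihL hndL) (ihR hndR)

end

theorem listMax_le {l : List ℕ} {M : ℕ} (h : ∀ x ∈ l, x ≤ M) : listMax l ≤ M := by
  induction l with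
  | nil => exact Nat.zero_le M
  | cons a t ih =>
    rw [List.forall_mem_cons] at h
    exact max_le h.1 (ih h.2)

theorem listMax_append_cons {L R : List ℕ} {M : ℕ} (hL : ∀ x ∈ L, x < M)
    (hR : ∀ x ∈ R, x ≤ M) : listMax (L ++ M :: R) = M := by
  induction L with
  | nil => exact max_eq_left (listMax_le hR)
  | cons a t ih =>
    rw [List.forall_mem_cons] at hL
    rw [List.cons_append, listMax, ih hL.2]
    exact max_eq_right hL.1.le

theorem takeWhile_ne_append_cons {L R : List ℕ} {M : ℕ} (hL : M ∉ L) :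
    (L ++ M :: R).takeWhile (fun x => x ≠ M) = L := by
  rw [List.takeWhile_append_of_pos fun x hx => decide_eq_true (ne_of_mem_of_not_mem hx hL),
    List.takeWhile_cons_of_neg (by simp), List.append_nil]

theorem dropWhile_ne_append_cons {L R : List ℕ} {M : ℕ} (hL : M ∉ L) :
    (L ++ M :: R).dropWhile (fun x => x ≠ M) = M :: R := by
  rw [List.dropWhile_append_of_pos fun x hx => decide_eq_true (ne_of_mem_of_not_mem hx hL),
    List.dropWhile_cons_of_neg (by simp)]

theorem stackSort_nil : stackSort [] = [] := by
  rw [stackSort]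

theorem stackSort_append_cons {L R : List ℕ} {M : ℕ} (hL : ∀ x ∈ L, x < M)
    (hR : ∀ x ∈ R, x ≤ M) : stackSort (L ++ M :: R) = stackSort L ++ stackSort R ++ [M] := by
  have hML : M ∉ L := fun h => lt_irrefl M (hL M h)
  cases h : L ++ M :: R with
  | nil => simp at h
  | cons a t =>
    rw [stackSort, ← h, listMax_append_cons hL hR, takeWhile_ne_append_cons hML,
      dropWhile_ne_append_cons hML, List.tail_cons]

theorem numDescents_cons_cons (a b : ℕ) (t : List ℕ) :
    numDescents (a :: b :: t) = numDescents (b :: t) + if b < a then 1 else 0 := by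
  by_cases h : b < a <;> simp [numDescents, h]

theorem numDescents_append_cons {L R : List ℕ} {M : ℕ} (hL : ∀ x ∈ L, x < M) :
    numDescents (L ++ M :: R) = numDescents L + numDescents (M :: R) := by
  induction L with
  | nil => exact (Nat.zero_add _).symm
  | cons a L ih =>
    rw [List.forall_mem_cons] at hL
    cases L with
    | nil =>
      rw [List.cons_append, List.nil_append, numDescents_cons_cons, if_neg hL.1.not_gt]
      exact (Nat.zero_add _).symm
    | cons b L =>
      rw [List.cons_append, List.cons_append, numDescents_cons_cons, ← List.cons_append,
        ih hL.2, numDescents_cons_cons]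
      omega

theorem numDescents_cons_of_forall_lt {R : List ℕ} {M : ℕ} (hR : ∀ x ∈ R, x < M) :
    numDescents (M :: R) = numDescents R + if R = [] then 0 else 1 := by
  cases R with
  | nil => rfl
  | cons b R => simp [numDescents_cons_cons, hR b List.mem_cons_self]

def descentFlip : List ℕ → List ℕ
  | [] => []
  | a :: t =>
    if (a :: t).takeWhile (fun x => x ≠ listMax (a :: t)) = [] ∨
        ((a :: t).dropWhile (fun x => x ≠ listMax (a :: t))).tail = [] then
      descentFlip ((a :: t).dropWhile (fun x => x ≠ listMax (a :: t))).tail ++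
        listMax (a :: t) :: descentFlip ((a :: t).takeWhile (fun x => x ≠ listMax (a :: t)))
    else
      descentFlip ((a :: t).takeWhile (fun x => x ≠ listMax (a :: t))) ++
        listMax (a :: t) :: descentFlip ((a :: t).dropWhile (fun x => x ≠ listMax (a :: t))).tail
termination_by l => l.length
decreasing_by
  all_goals first
  | exact length_takeWhile_lt (listMax_mem _ (by simp)) (by simp)
  | have h := length_dropWhile_le (fun x => decide (x ≠ listMax (a :: t))) (a :: t)
    simp only [List.length_tail, List.length_cons] at *
    omega

theorem descentFlip_nil : descentFlip [] = [] := by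
  rw [descentFlip]

theorem descentFlip_append_cons {L R : List ℕ} {M : ℕ} (hL : ∀ x ∈ L, x < M)
    (hR : ∀ x ∈ R, x ≤ M) :
    descentFlip (L ++ M :: R) = if L = [] ∨ R = [] then descentFlip R ++ M :: descentFlip L
      else descentFlip L ++ M :: descentFlip R := by
  have hML : M ∉ L := fun h => lt_irrefl M (hL M h)
  cases h : L ++ M :: R with
  | nil => simp at h
  | cons a t =>
    rw [descentFlip, ← h, listMax_append_cons hL hR, takeWhile_ne_append_cons hML,
      dropWhile_ne_append_cons hML, List.tail_cons]

theorem descentFlip_perm (l : List ℕ) : (descentFlip l).Perm l := by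
  induction l using List.induction_on_max with
  | nil => rw [descentFlip_nil]
  | split L M R hL hR ihL ihR =>
    rw [descentFlip_append_cons hL hR]
    split_ifs
    · exact (ihR.append (ihL.cons M)).trans (List.perm_middle.trans
        ((List.perm_append_comm.cons M).trans List.perm_middle.symm))
    · exact ihL.append (ihR.cons M)

theorem descentFlip_eq_nil_iff {l : List ℕ} : descentFlip l = [] ↔ l = [] :=
  ⟨fun h => List.perm_nil.1 (h ▸ descentFlip_perm l).symm, fun h => h ▸ descentFlip_nil⟩

theorem forall_mem_descentFlip {l : List ℕ} {p : ℕ → Prop} :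
    (∀ x ∈ descentFlip l, p x) ↔ ∀ x ∈ l, p x := by
  simp only [(descentFlip_perm l).mem_iff]

theorem stackSort_descentFlip {l : List ℕ} (hl : l.Nodup) :
    stackSort (descentFlip l) = stackSort l := by
  refine hl.induction_on_max (by rw [descentFlip_nil]) fun L M R hL hR ihL ihR => ?_
  have hφL := forall_mem_descentFlip.2 hL
  have hφR := forall_mem_descentFlip.2 hR
  rw [descentFlip_append_cons hL (le_of_lt <| hR · ·),
    stackSort_append_cons hL (le_of_lt <| hR · ·)]
  split_ifs with h
  · rw [stackSort_append_cons hφR (le_of_lt <| hφL · ·), ihL, ihR]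
    rcases h with rfl | rfl <;> simp only [stackSort_nil, List.append_nil, List.nil_append]
  · rw [stackSort_append_cons hφL (le_of_lt <| hφR · ·), ihL, ihR]

theorem descentFlip_descentFlip {l : List ℕ} (hl : l.Nodup) :
    descentFlip (descentFlip l) = l := by
  refine hl.induction_on_max (by rw [descentFlip_nil, descentFlip_nil])
    fun L M R hL hR ihL ihR => ?_
  have hφL := forall_mem_descentFlip.2 hL
  have hφR := forall_mem_descentFlip.2 hR
  rw [descentFlip_append_cons hL (le_of_lt <| hR · ·)]
  split_ifs with h
  · rw [descentFlip_append_cons hφR (le_of_lt <| hφL · ·),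
      if_pos (by simpa only [descentFlip_eq_nil_iff] using h.symm), ihL, ihR]
  · rw [descentFlip_append_cons hφL (le_of_lt <| hφR · ·),
      if_neg (by simpa only [descentFlip_eq_nil_iff] using h), ihL, ihR]

theorem numDescents_descentFlip_add {l : List ℕ} (hl : l.Nodup) :
    numDescents (descentFlip l) + numDescents l = l.length - 1 := by
  refine hl.induction_on_max (by rw [descentFlip_nil]; rfl) fun L M R hL hR ihL ihR => ?_
  have hφL := forall_mem_descentFlip.2 hL
  have hφR := forall_mem_descentFlip.2 hR
  have hflip : numDescents (descentFlip (L ++ M :: R)) =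
      numDescents (descentFlip L) + numDescents (descentFlip R) + if L = [] then 0 else 1 := by
    rw [descentFlip_append_cons hL (le_of_lt <| hR · ·)]
    by_cases h : L = [] ∨ R = []
    · rw [if_pos h, numDescents_append_cons hφR, numDescents_cons_of_forall_lt hφL]
      simp only [descentFlip_eq_nil_iff]
      omega
    · obtain ⟨hL0, hR0⟩ := not_or.1 h
      rw [if_neg h, numDescents_append_cons hφL, numDescents_cons_of_forall_lt hφR,
        if_neg (descentFlip_eq_nil_iff.not.2 hR0), if_neg hL0, add_assoc]
  rw [hflip, numDescents_append_cons hL, numDescents_cons_of_forall_lt hR, List.length_append,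
    List.length_cons]
  simp only [← List.length_eq_zero_iff]
  split_ifs <;> omega

theorem mem_Sn {n : ℕ} {σ : List ℕ} : σ ∈ Sn n ↔ σ.Perm (idPerm n) := by
  simp [Sn, List.mem_permutations]

theorem nodup_of_mem_Sn {n : ℕ} {σ : List ℕ} (hσ : σ ∈ Sn n) : σ.Nodup :=
  (mem_Sn.1 hσ).nodup_iff.2 (List.nodup_range' ..)

theorem length_of_mem_Sn {n : ℕ} {σ : List ℕ} (hσ : σ ∈ Sn n) : σ.length = n := by
  rw [(mem_Sn.1 hσ).length_eq, idPerm, List.length_range']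

theorem descentFlip_mem_Sn {n : ℕ} {σ : List ℕ} (hσ : σ ∈ Sn n) : descentFlip σ ∈ Sn n :=
  mem_Sn.2 ((descentFlip_perm σ).trans (mem_Sn.1 hσ))

theorem descentFlip_mem_filter {n k k' : ℕ} {π σ : List ℕ} (hk : k + k' = n - 1)
    (hσ : σ ∈ (Sn n).filter (fun σ => stackSort σ = π ∧ numDescents σ = k)) :
    descentFlip σ ∈ (Sn n).filter (fun σ => stackSort σ = π ∧ numDescents σ = k') := by
  obtain ⟨hσS, hsort, hdes⟩ := Finset.mem_filter.1 hσ
  have hnd := nodup_of_mem_Sn hσS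
  refine Finset.mem_filter.2 ⟨descentFlip_mem_Sn hσS, (stackSort_descentFlip hnd).trans hsort, ?_⟩
  have hsum := numDescents_descentFlip_add hnd
  rw [length_of_mem_Sn hσS] at hsum
  omega

theorem fertilityDes_symm_general (n : ℕ) (π : List ℕ) (m : ℕ) (hm : m ≤ n - 1) :
    fertilityDes n π m = fertilityDes n π (n - m - 1) := by
  unfold fertilityDes
  refine Finset.card_nbij' descentFlip descentFlip (fun σ hσ => descentFlip_mem_filter ?_ hσ)
    (fun σ hσ => descentFlip_mem_filter ?_ hσ) (fun σ hσ => ?_) (fun σ hσ => ?_)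
  · omega
  · omega
  all_goals exact descentFlip_descentFlip (nodup_of_mem_Sn (Finset.mem_filter.1 hσ).1)

/-- For every permutation `π ∈ S_n` and every integer `0 ≤ m ≤ n−1`,
`F(π, m) = F(π, n−m−1)`. -/
theorem fertilityDes_symm (n : ℕ) (hn : 1 ≤ n) (π : List ℕ) (hπ : π ∈ Sn n)
    (m : ℕ) (hm : m ≤ n - 1) :
    fertilityDes n π m = fertilityDes n π (n - m - 1) :=
  fertilityDes_symm_general n π m hm
end
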